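/- arXiv:2202.01898 — 5 statements merged into one kernel-verified Lean document; each statement's English description precedes it below -/
import Mathlib

section
/- Let (x_i) be the sequence defined by x_i = 1 if i is a perfect cube (i = m³ for some m ∈ ℕ) and x_i = 0 otherwise. Then with p_i = 1 for all i (so p(t) = 1/(1-t)), the sequence (x_i) is P-summable to 0: lim_{t→1⁻} (1-t) Σ_{i=1}^∞ x_i t^{i-1} = 0, even though (x_i) does not converge in the usual sense. -/
open Filter Set Topology

private lemma cube_ineq (k M : ℕ) : k * M ≤ M ^ 3 + k ^ 2 := by
  rcases le_or_gt k M with h | h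
  · have h2 : k ≤ M ^ 2 := le_trans h (Nat.le_self_pow two_ne_zero M)
    calc k * M ≤ M ^ 2 * M := Nat.mul_le_mul_right _ h2
      _ = M ^ 3 := by ring
      _ ≤ M ^ 3 + k ^ 2 := Nat.le_add_right _ _
  · calc k * M ≤ k * k := Nat.mul_le_mul_left _ h.le
      _ = k ^ 2 := (sq k).symm
      _ ≤ M ^ 3 + k ^ 2 := Nat.le_add_left _ _

open Filter Set Topology Classical in

/-- The indicator sequence of perfect cubes (`x i = 1` iff `i = m³` for some
`m ≥ 1`) is Abel summable (P-summable with `p i = 1`) to `0`, even though it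
does not converge in the usual sense.  The series `Σ_{i≥1} xᵢ tⁱ⁻¹` is written
`∑' n, x (n+1) * t ^ n`. -/
theorem cube_indicator_abel_summable_to_zero (x : ℕ → ℝ)
    (hx : ∀ i, x i = if ∃ m : ℕ, 0 < m ∧ m ^ 3 = i then 1 else 0) :
    (∀ t ∈ Set.Ioo (0 : ℝ) 1, Summable fun n => x (n + 1) * t ^ n) ∧
      Tendsto (fun t : ℝ => (1 - t) * ∑' n, x (n + 1) * t ^ n) (𝓝[<] 1) (nhds 0) ∧
      ¬ ∃ L : ℝ, Tendsto x atTop (nhds L) := by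
  have hx0 : ∀ i, 0 ≤ x i := by intro i; rw [hx]; split <;> norm_num
  have hx1 : ∀ i, x i ≤ 1 := by intro i; rw [hx]; split <;> norm_num
  have hsum : ∀ t ∈ Set.Ioo (0 : ℝ) 1, Summable fun n => x (n + 1) * t ^ n := by
    intro t ht
    refine Summable.of_nonneg_of_le
      (fun n => mul_nonneg (hx0 _) (pow_nonneg ht.1.le n)) (fun n => ?_)
      (summable_geometric_of_lt_one ht.1.le ht.2)
    calc x (n + 1) * t ^ n ≤ 1 * t ^ n :=
          mul_le_mul_of_nonneg_right (hx1 _) (pow_nonneg ht.1.le n)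
      _ = t ^ n := one_mul _
  refine ⟨hsum, ?_, ?_⟩
  · -- the Abel limit
    have hginj : Function.Injective (fun m : ℕ => (m + 1) ^ 3 - 1) := by
      intro a b h
      simp only at h
      have ha : 1 ≤ (a + 1) ^ 3 := Nat.one_le_pow _ _ (Nat.succ_pos a)
      have hb : 1 ≤ (b + 1) ^ 3 := Nat.one_le_pow _ _ (Nat.succ_pos b)
      have h3 : (a + 1) ^ 3 = (b + 1) ^ 3 := by omega
      have := Nat.pow_left_injective (n := 3) three_ne_zero h3
      omega
    -- rewrite the sum over cubes
    have hS : ∀ t ∈ Set.Ioo (0 : ℝ) 1,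
        (∑' n, x (n + 1) * t ^ n) = ∑' m : ℕ, t ^ ((m + 1) ^ 3 - 1) := by
      intro t ht
      rw [← Function.Injective.tsum_eq hginj (f := fun n => x (n + 1) * t ^ n) ?_]
      · refine tsum_congr fun m => ?_
        have h1 : (m + 1) ^ 3 - 1 + 1 = (m + 1) ^ 3 :=
          Nat.sub_add_cancel (Nat.one_le_pow _ _ (Nat.succ_pos m))
        simp only [h1]
        rw [hx, if_pos ⟨m + 1, Nat.succ_pos m, rfl⟩, one_mul]
      · intro n hn
        have hxn : x (n + 1) ≠ 0 := by
          intro h0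
          apply hn
          simp [Function.support, h0]
        rw [hx] at hxn
        by_cases hc : ∃ m : ℕ, 0 < m ∧ m ^ 3 = n + 1
        · obtain ⟨m, hm, hm3⟩ := hc
          refine ⟨m - 1, ?_⟩
          have hm1 : m - 1 + 1 = m := Nat.succ_pred_eq_of_pos hm
          simp only [hm1]
          omega
        · exact absurd (if_neg hc) hxn
    -- upper bound for each k
    have key : ∀ k : ℕ, 1 ≤ k → ∀ t ∈ Set.Ioo (0 : ℝ) 1,
        (∑' m : ℕ, t ^ ((m + 1) ^ 3 - 1)) ≤
          t ^ k / t ^ (k ^ 2 + 1) * (1 - t ^ k)⁻¹ := by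
      intro k hk t ht
      have ht0 : (0 : ℝ) < t := ht.1
      have htk1 : t ^ k < 1 := pow_lt_one₀ ht0.le ht.2 (by omega)
      have htk0 : (0 : ℝ) ≤ t ^ k := pow_nonneg ht0.le k
      have hsumg : Summable fun m : ℕ => t ^ k / t ^ (k ^ 2 + 1) * (t ^ k) ^ m :=
        (summable_geometric_of_lt_one htk0 htk1).mul_left _
      have hterm : ∀ m : ℕ,
          t ^ ((m + 1) ^ 3 - 1) ≤ t ^ k / t ^ (k ^ 2 + 1) * (t ^ k) ^ m := by
        intro m
        have hpos : (0 : ℝ) < t ^ (k ^ 2 + 1) := pow_pos ht0 _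
        rw [div_mul_eq_mul_div, le_div_iff₀ hpos, ← pow_mul, ← pow_add, ← pow_add]
        apply pow_le_pow_of_le_one ht0.le ht.2.le
        have h1 : (m + 1) ^ 3 - 1 + (k ^ 2 + 1) = (m + 1) ^ 3 + k ^ 2 := by
          have : 1 ≤ (m + 1) ^ 3 := Nat.one_le_pow _ _ (Nat.succ_pos m)
          omega
        rw [h1]
        calc k + k * m = k * (m + 1) := by ring
          _ ≤ (m + 1) ^ 3 + k ^ 2 := cube_ineq k (m + 1)
      calc (∑' m : ℕ, t ^ ((m + 1) ^ 3 - 1))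
          ≤ ∑' m : ℕ, t ^ k / t ^ (k ^ 2 + 1) * (t ^ k) ^ m :=
            Summable.tsum_le_tsum hterm
              (Summable.of_nonneg_of_le (fun m => pow_nonneg ht0.le _) hterm hsumg)
              hsumg
        _ = t ^ k / t ^ (k ^ 2 + 1) * (1 - t ^ k)⁻¹ := by
            rw [tsum_mul_left, tsum_geometric_of_lt_one htk0 htk1]
    -- limit of the bounding function
    have hlim : ∀ k : ℕ, 1 ≤ k →
        Tendsto (fun t : ℝ => (1 - t) * (t ^ k / t ^ (k ^ 2 + 1) * (1 - t ^ k)⁻¹))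
          (𝓝[<] (1 : ℝ)) (𝓝 (1 / (k : ℝ))) := by
      intro k hk
      have hIoo : Set.Ioo (0 : ℝ) 1 ∈ 𝓝[<] (1 : ℝ) :=
        Ioo_mem_nhdsLT_of_mem (by constructor <;> norm_num)
      have hk0 : (0 : ℝ) < (k : ℝ) := by exact_mod_cast hk
      have hc : ContinuousAt
          (fun t : ℝ => t ^ k / ((∑ j ∈ Finset.range k, t ^ j) * t ^ (k ^ 2 + 1))) 1 := by
        apply ContinuousAt.div
        · fun_prop
        · fun_prop
        · simp only [one_pow, Finset.sum_const, Finset.card_range, nsmul_eq_mul, mul_one]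
          positivity
      have hval : (fun t : ℝ => t ^ k / ((∑ j ∈ Finset.range k, t ^ j) * t ^ (k ^ 2 + 1))) 1
          = 1 / (k : ℝ) := by
        simp
      have htend : Tendsto
          (fun t : ℝ => t ^ k / ((∑ j ∈ Finset.range k, t ^ j) * t ^ (k ^ 2 + 1)))
          (𝓝[<] (1 : ℝ)) (𝓝 (1 / (k : ℝ))) := by
        rw [← hval]
        exact tendsto_nhdsWithin_of_tendsto_nhds hc.tendsto
      refine htend.congr' ?_
      filter_upwards [hIoo] with t ht
      have ht1 : t ≠ 1 := ne_of_lt ht.2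
      have hgeom : (1 : ℝ) - t ^ k = (∑ j ∈ Finset.range k, t ^ j) * (1 - t) := by
        have := geom_sum_mul (x := t) (n := k)
        nlinarith [this]
      have hspos : (0 : ℝ) < ∑ j ∈ Finset.range k, t ^ j := by
        apply Finset.sum_pos
        · intro j _; exact pow_pos ht.1 j
        · exact Finset.nonempty_range_iff.mpr (by omega)
      have h1t : (0 : ℝ) < 1 - t := by linarith [ht.2]
      rw [hgeom]
      have htp : (0 : ℝ) < t ^ (k ^ 2 + 1) := pow_pos ht.1 _
      field_simp
    -- final epsilon argument
    rw [NormedAddCommGroup.tendsto_nhds_zero]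
    intro ε hε
    obtain ⟨k, hkgt⟩ := exists_nat_gt (2 / ε)
    have hk1 : 1 ≤ k := by
      have : (0 : ℝ) < 2 / ε := by positivity
      have : (0 : ℝ) < (k : ℝ) := lt_trans this hkgt
      exact_mod_cast Nat.one_le_iff_ne_zero.mpr (by exact_mod_cast this.ne')
    have hkε : 1 / (k : ℝ) < ε := by
      have h2ε : (0 : ℝ) < 2 / ε := by positivity
      have := one_div_lt_one_div_of_lt h2ε hkgt
      rw [one_div_div] at this
      linarith
    have hev : ∀ᶠ t in 𝓝[<] (1 : ℝ),
        (1 - t) * (t ^ k / t ^ (k ^ 2 + 1) * (1 - t ^ k)⁻¹) < ε :=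
      (hlim k hk1).eventually_lt_const hkε
    have hIoo : Set.Ioo (0 : ℝ) 1 ∈ 𝓝[<] (1 : ℝ) :=
      Ioo_mem_nhdsLT_of_mem (by constructor <;> norm_num)
    filter_upwards [hIoo, hev] with t ht hlt
    have h1t : (0 : ℝ) ≤ 1 - t := by linarith [ht.2.le]
    have hnn : 0 ≤ (1 - t) * ∑' n, x (n + 1) * t ^ n :=
      mul_nonneg h1t
        (tsum_nonneg fun n => mul_nonneg (hx0 _) (pow_nonneg ht.1.le n))
    rw [Real.norm_eq_abs, abs_of_nonneg hnn]
    calc (1 - t) * ∑' n, x (n + 1) * t ^ n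
        = (1 - t) * ∑' m : ℕ, t ^ ((m + 1) ^ 3 - 1) := by rw [hS t ht]
      _ ≤ (1 - t) * (t ^ k / t ^ (k ^ 2 + 1) * (1 - t ^ k)⁻¹) :=
          mul_le_mul_of_nonneg_left (key k hk1 t ht) h1t
      _ < ε := hlt
  · -- non-convergence
    rintro ⟨L, hL⟩
    have hcube : ∀ m : ℕ, x ((m + 1) ^ 3) = 1 := by
      intro m; rw [hx, if_pos ⟨m + 1, Nat.succ_pos m, rfl⟩]
    have hnotcube : ∀ m : ℕ, x ((m + 1) ^ 3 + 1) = 0 := by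
      intro m
      rw [hx, if_neg]
      rintro ⟨j, hj0, hj⟩
      have h1 : m + 1 < j := by
        by_contra h
        push_neg at h
        have h2 := Nat.pow_le_pow_left h 3
        have h3 : (m + 1) ^ 3 + 1 ≤ (m + 1) ^ 3 := hj ▸ h2
        exact Nat.not_succ_le_self _ h3
      have h2 : (m + 2) ^ 3 ≤ j ^ 3 := Nat.pow_le_pow_left h1 3
      rw [hj] at h2
      nlinarith [h2]
    have t1 : Tendsto (fun m : ℕ => (m + 1) ^ 3) atTop atTop :=
      tendsto_atTop_mono
        (fun m => le_trans (Nat.le_succ m) (Nat.le_self_pow three_ne_zero (m + 1)))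
        tendsto_id
    have t2 : Tendsto (fun m : ℕ => (m + 1) ^ 3 + 1) atTop atTop :=
      tendsto_atTop_mono (fun m => Nat.le_succ _) t1
    have e1 : Tendsto (fun m : ℕ => x ((m + 1) ^ 3)) atTop (𝓝 L) := hL.comp t1
    have e1' : Tendsto (fun m : ℕ => x ((m + 1) ^ 3)) atTop (𝓝 1) := by
      simp only [hcube]; exact tendsto_const_nhds
    have e2 : Tendsto (fun m : ℕ => x ((m + 1) ^ 3 + 1)) atTop (𝓝 L) := hL.comp t2
    have e2' : Tendsto (fun m : ℕ => x ((m + 1) ^ 3 + 1)) atTop (𝓝 0) := by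
      simp only [hnotcube]; exact tendsto_const_nhds
    have hL1 : L = 1 := tendsto_nhds_unique e1 e1'
    have hL0 : L = 0 := tendsto_nhds_unique e2 e2'
    rw [hL1] at hL0
    exact one_ne_zero hL0
end

section
/- Let (T_n) be a sequence of positive linear operators from C[a,b] to C[a,b], let (p_i) be a nonnegative sequence with p_1 > 0 defining a power series method p(t) = Σ p_i t^{i-1} with radius of convergence 1 and divergent partial sums, and assume Σ_n ‖T_n(1)‖ p_n t^{n-1} < ∞ for each t ∈ (0,1). If lim_{t→1⁻} ‖(1/p(t)) Σ_n p_n t^{n-1} T_n(e_i) − e_i‖ = 0 for the test functions e_0(x)=1, e_1(x)=x, e_2(x)=x², then for every f ∈ C[a,b], lim_{t→1⁻} ‖(1/p(t)) Σ_n p_n t^{n-1} T_n(f) − f‖ = 0. -/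
open Filter Set Topology

/-- The constant test function `e₀ = 1` on `[a, b]`. -/
def e₀ (a b : ℝ) : C(Set.Icc a b, ℝ) := ContinuousMap.const _ 1

/-- The test function `e₁(x) = x` on `[a, b]`. -/
def e₁ (a b : ℝ) : C(Set.Icc a b, ℝ) := ⟨fun x => (x : ℝ), by fun_prop⟩

/-- The test function `e₂(x) = x²` on `[a, b]`. -/
def e₂ (a b : ℝ) : C(Set.Icc a b, ℝ) := ⟨fun x => (x : ℝ) ^ 2, by fun_prop⟩

set_option maxHeartbeats 2000000 in
/-- Korovkin theorem via the power series summability method: if the P-means of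
`Tₙ(eᵢ)` converge uniformly (sup over `x ∈ [a,b]`) to `eᵢ` for `i = 0, 1, 2` as
`t → 1⁻`, then they do so for every `f ∈ C[a,b]`. -/
theorem korovkin_power_series (a b : ℝ) (hab : a ≤ b)
    (T : ℕ → C(Set.Icc a b, ℝ) →ₗ[ℝ] C(Set.Icc a b, ℝ))
    (hT_pos : ∀ n, ∀ f : C(Set.Icc a b, ℝ), (∀ x, 0 ≤ f x) → ∀ x, 0 ≤ T n f x)
    (p : ℕ → ℝ) (hp_nonneg : ∀ n, 0 ≤ p n) (hp_pos : 0 < p 0)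
    (hp_radius : ∀ t : ℝ, |t| < 1 → Summable fun n => p n * t ^ n)
    (hp_div : Tendsto (fun N => ∑ i ∈ Finset.range N, p i) atTop atTop)
    (hT_bdd : ∀ t ∈ Set.Ioo (0 : ℝ) 1, Summable fun n => ‖T n (e₀ a b)‖ * p n * t ^ n)
    (h_test : ∀ e ∈ ({e₀ a b, e₁ a b, e₂ a b} : Set C(Set.Icc a b, ℝ)),
      Tendsto (fun t : ℝ =>
          ⨆ x : Set.Icc a b,
            |(∑' n, p n * t ^ n * T n e x) / (∑' n, p n * t ^ n) - e x|)
        (𝓝[<] 1) (nhds 0)) :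
    ∀ f : C(Set.Icc a b, ℝ),
      Tendsto (fun t : ℝ =>
          ⨆ x : Set.Icc a b,
            |(∑' n, p n * t ^ n * T n f x) / (∑' n, p n * t ^ n) - f x|)
        (𝓝[<] 1) (nhds 0) := by
  intro f
  have hne : (Set.Icc a b).Nonempty := Set.nonempty_Icc.mpr hab
  haveI : Nonempty (Set.Icc a b) := hne.to_subtype
  set c : ℝ := max |a| |b| with hcdef
  have hc0 : (0:ℝ) ≤ c := le_trans (abs_nonneg a) (le_max_left _ _)
  have hxc : ∀ x : Set.Icc a b, |(x:ℝ)| ≤ c := by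
    rintro ⟨x, hx1, hx2⟩
    have h1 : -|a| ≤ a := neg_abs_le a
    have h2 : b ≤ |b| := le_abs_self b
    have h3 : |a| ≤ c := le_max_left _ _
    have h4 : |b| ≤ c := le_max_right _ _
    rw [abs_le]
    constructor <;> simp only [] <;> linarith
  -- monotonicity and pointwise bounds for the operators
  have hTmono : ∀ n (g h : C(Set.Icc a b, ℝ)), (∀ y, g y ≤ h y) → ∀ x, T n g x ≤ T n h x := by
    intro n g h hgh x
    have := hT_pos n (h - g) (fun y => by
      simpa [sub_nonneg] using hgh y) x
    simpa [map_sub, sub_nonneg] using this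
  have hTabsle : ∀ n (g h : C(Set.Icc a b, ℝ)), (∀ y, |g y| ≤ h y) → ∀ x, |T n g x| ≤ T n h x := by
    intro n g h hgh x
    rw [abs_le]
    constructor
    · have := hTmono n (-h) g (fun y => by
        have := (abs_le.1 (hgh y)).1
        simpa using this) x
      simpa [map_neg] using this
    · exact hTmono n g h (fun y => le_trans (le_abs_self _) (hgh y)) x
  have hTnorm : ∀ n (g : C(Set.Icc a b, ℝ)) x, |T n g x| ≤ ‖g‖ * ‖T n (e₀ a b)‖ := by
    intro n g x
    have h1 : |T n g x| ≤ T n (‖g‖ • e₀ a b) x := by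
      refine hTabsle n g _ (fun y => ?_) x
      have := g.norm_coe_le_norm y
      simpa [e₀, Real.norm_eq_abs] using this
    have h2 : T n (‖g‖ • e₀ a b) x = ‖g‖ * T n (e₀ a b) x := by
      rw [map_smul]; simp
    rw [h2] at h1
    refine h1.trans (mul_le_mul_of_nonneg_left ?_ (norm_nonneg g))
    exact le_trans (le_abs_self _) ((T n (e₀ a b)).norm_coe_le_norm x)
  -- summability facts
  have hsum_p : ∀ t ∈ Set.Ioo (0:ℝ) 1, Summable fun n => p n * t ^ n := fun t ht =>
    hp_radius t (by rw [abs_of_pos ht.1]; exact ht.2)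
  have hpt_nonneg : ∀ t ∈ Set.Ioo (0:ℝ) 1, ∀ n, 0 ≤ p n * t ^ n := fun t ht n =>
    mul_nonneg (hp_nonneg n) (pow_nonneg ht.1.le n)
  have hPpos : ∀ t ∈ Set.Ioo (0:ℝ) 1, 0 < ∑' n, p n * t ^ n := by
    intro t ht
    have h0 : (0:ℝ) < p 0 * t ^ 0 := by simpa using hp_pos
    exact lt_of_lt_of_le h0 (Summable.le_tsum (hsum_p t ht) 0 (fun i _ => hpt_nonneg t ht i))
  have hsumT : ∀ (g : C(Set.Icc a b, ℝ)), ∀ t ∈ Set.Ioo (0:ℝ) 1, ∀ x : Set.Icc a b,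
      Summable fun n => p n * t ^ n * T n g x := by
    intro g t ht x
    have habs : Summable fun n => |p n * t ^ n * T n g x| := by
      refine Summable.of_nonneg_of_le (fun n => abs_nonneg _) (fun n => ?_)
        (((hT_bdd t ht).mul_left ‖g‖))
      rw [abs_mul, abs_of_nonneg (hpt_nonneg t ht n)]
      calc p n * t ^ n * |T n g x| ≤ p n * t ^ n * (‖g‖ * ‖T n (e₀ a b)‖) :=
            mul_le_mul_of_nonneg_left (hTnorm n g x) (hpt_nonneg t ht n)
        _ = ‖g‖ * (‖T n (e₀ a b)‖ * p n * t ^ n) := by ring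
    exact habs.of_abs
  -- |tsum| bounds
  have hAabs : ∀ (g h : C(Set.Icc a b, ℝ)), ∀ t ∈ Set.Ioo (0:ℝ) 1, ∀ x : Set.Icc a b,
      (∀ y, |g y| ≤ h y) →
      |∑' n, p n * t ^ n * T n g x| ≤ ∑' n, p n * t ^ n * T n h x := by
    intro g h t ht x hgh
    have h1 : |∑' n, p n * t ^ n * T n g x| ≤ ∑' n, |p n * t ^ n * T n g x| := by
      simpa only [Real.norm_eq_abs] using norm_tsum_le_tsum_norm (f := fun n => p n * t ^ n * T n g x)
        (by simpa only [Real.norm_eq_abs] using (hsumT g t ht x).abs)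
    refine h1.trans (Summable.tsum_le_tsum (fun n => ?_) (hsumT g t ht x).abs (hsumT h t ht x))
    rw [abs_mul, abs_of_nonneg (hpt_nonneg t ht n)]
    exact mul_le_mul_of_nonneg_left (hTabsle n g h hgh x) (hpt_nonneg t ht n)
  -- linearity of the means
  have hAadd : ∀ (g h : C(Set.Icc a b, ℝ)), ∀ t ∈ Set.Ioo (0:ℝ) 1, ∀ x : Set.Icc a b,
      (∑' n, p n * t ^ n * T n (g + h) x)
        = (∑' n, p n * t ^ n * T n g x) + ∑' n, p n * t ^ n * T n h x := by
    intro g h t ht x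
    have h1 : ∀ n, p n * t ^ n * T n (g + h) x
        = p n * t ^ n * T n g x + p n * t ^ n * T n h x := by
      intro n; rw [map_add]; simp [mul_add]
    rw [tsum_congr h1]
    exact Summable.tsum_add (hsumT g t ht x) (hsumT h t ht x)
  have hAsmul : ∀ (r : ℝ) (g : C(Set.Icc a b, ℝ)), ∀ t ∈ Set.Ioo (0:ℝ) 1, ∀ x : Set.Icc a b,
      (∑' n, p n * t ^ n * T n (r • g) x) = r * ∑' n, p n * t ^ n * T n g x := by
    intro r g t ht x
    rw [← tsum_mul_left]
    refine tsum_congr (fun n => ?_)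
    rw [map_smul]
    simp only [ContinuousMap.smul_apply, smul_eq_mul]
    ring
  have he0x : ∀ x : Set.Icc a b, e₀ a b x = 1 := fun _ => rfl
  have he1x : ∀ x : Set.Icc a b, e₁ a b x = (x : ℝ) := fun _ => rfl
  have he2x : ∀ x : Set.Icc a b, e₂ a b x = (x : ℝ) ^ 2 := fun _ => rfl
  -- uniform bound used for BddAbove
  have hAnorm : ∀ (g : C(Set.Icc a b, ℝ)), ∀ t ∈ Set.Ioo (0:ℝ) 1, ∀ x : Set.Icc a b,
      |∑' n, p n * t ^ n * T n g x| ≤ ‖g‖ * ∑' n, ‖T n (e₀ a b)‖ * p n * t ^ n := by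
    intro g t ht x
    have h1 : |∑' n, p n * t ^ n * T n g x| ≤ ∑' n, |p n * t ^ n * T n g x| := by
      simpa only [Real.norm_eq_abs] using norm_tsum_le_tsum_norm (f := fun n => p n * t ^ n * T n g x)
        (by simpa only [Real.norm_eq_abs] using (hsumT g t ht x).abs)
    refine h1.trans ?_
    rw [← tsum_mul_left]
    refine Summable.tsum_le_tsum (fun n => ?_) (hsumT g t ht x).abs ((hT_bdd t ht).mul_left ‖g‖)
    rw [abs_mul, abs_of_nonneg (hpt_nonneg t ht n)]
    calc p n * t ^ n * |T n g x| ≤ p n * t ^ n * (‖g‖ * ‖T n (e₀ a b)‖) :=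
          mul_le_mul_of_nonneg_left (hTnorm n g x) (hpt_nonneg t ht n)
      _ = ‖g‖ * (‖T n (e₀ a b)‖ * p n * t ^ n) := by ring
  have hbdd : ∀ (e : C(Set.Icc a b, ℝ)), ∀ t ∈ Set.Ioo (0:ℝ) 1,
      BddAbove (Set.range fun x : Set.Icc a b =>
        |(∑' n, p n * t ^ n * T n e x) / (∑' n, p n * t ^ n) - e x|) := by
    intro e t ht
    have hP := hPpos t ht
    refine ⟨‖e‖ * (∑' n, ‖T n (e₀ a b)‖ * p n * t ^ n) / (∑' n, p n * t ^ n) + ‖e‖, ?_⟩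
    rintro r ⟨x, rfl⟩
    have htri : |(∑' n, p n * t ^ n * T n e x) / (∑' n, p n * t ^ n) - e x|
        ≤ |(∑' n, p n * t ^ n * T n e x) / (∑' n, p n * t ^ n)| + |e x| := by
      have := abs_add_le ((∑' n, p n * t ^ n * T n e x) / (∑' n, p n * t ^ n)) (-(e x))
      simpa [sub_eq_add_neg] using this
    refine htri.trans (add_le_add ?_ ?_)
    · rw [abs_div, abs_of_pos hP]
      gcongr
      exact hAnorm e t ht x
    · exact le_trans (le_abs_self _) (by simpa [Real.norm_eq_abs] using e.norm_coe_le_norm x)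
  -- the main limit argument
  rw [Metric.tendsto_nhds]
  intro ε hε
  have hM0 : (0:ℝ) ≤ ‖f‖ := norm_nonneg f
  have huc : UniformContinuous f := CompactSpace.uniformContinuous_of_continuous f.continuous
  obtain ⟨δ, hδ0, hδ⟩ := Metric.uniformContinuous_iff.mp huc (ε/4) (by positivity)
  set M := ‖f‖ with hM
  set K := 2 * M / δ ^ 2 with hKdef
  have hK0 : 0 ≤ K := by positivity
  have hfK : ∀ x y : Set.Icc a b, |f y - f x| ≤ ε/4 + K * ((y:ℝ) - (x:ℝ)) ^ 2 := by
    intro x y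
    by_cases hd : dist y x < δ
    · have h2 : |f y - f x| < ε/4 := by
        have := hδ hd
        rwa [Real.dist_eq] at this
      nlinarith [sq_nonneg ((y:ℝ) - (x:ℝ)), hK0, mul_nonneg hK0 (sq_nonneg ((y:ℝ) - (x:ℝ)))]
    · push_neg at hd
      have hyx : δ ≤ |(y:ℝ) - (x:ℝ)| := by rwa [Subtype.dist_eq, Real.dist_eq] at hd
      have h2 : δ ^ 2 ≤ ((y:ℝ) - (x:ℝ)) ^ 2 := by
        nlinarith [abs_nonneg ((y:ℝ) - (x:ℝ)), sq_abs ((y:ℝ) - (x:ℝ))]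
      have h3 : |f y - f x| ≤ 2 * M := by
        have hy := f.norm_coe_le_norm y
        have hx := f.norm_coe_le_norm x
        rw [Real.norm_eq_abs] at hy hx
        have := abs_add_le (f y) (-(f x))
        rw [abs_neg] at this
        calc |f y - f x| ≤ |f y| + |f x| := by simpa [sub_eq_add_neg] using this
          _ ≤ 2 * M := by rw [hM]; linarith
      have h4 : 2 * M ≤ K * ((y:ℝ) - (x:ℝ)) ^ 2 := by
        have : 2 * M = K * δ ^ 2 := by rw [hKdef]; field_simp
        rw [this]
        exact mul_le_mul_of_nonneg_left h2 hK0
      linarith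
  -- key uniform estimate for each t ∈ (0,1)
  have key : ∀ t ∈ Set.Ioo (0:ℝ) 1,
      (⨆ x : Set.Icc a b, |(∑' n, p n * t ^ n * T n f x) / (∑' n, p n * t ^ n) - f x|)
      ≤ ε/4
        + (ε/4 + K * c ^ 2 + M) * (⨆ x : Set.Icc a b,
            |(∑' n, p n * t ^ n * T n (e₀ a b) x) / (∑' n, p n * t ^ n) - e₀ a b x|)
        + 2 * K * c * (⨆ x : Set.Icc a b,
            |(∑' n, p n * t ^ n * T n (e₁ a b) x) / (∑' n, p n * t ^ n) - e₁ a b x|)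
        + K * (⨆ x : Set.Icc a b,
            |(∑' n, p n * t ^ n * T n (e₂ a b) x) / (∑' n, p n * t ^ n) - e₂ a b x|) := by
    intro t ht
    have hP := hPpos t ht
    refine ciSup_le fun x => ?_
    set X : ℝ := (x:ℝ) with hXdef
    have hα0 : 0 ≤ ε/4 + K * X ^ 2 :=
      add_nonneg (by linarith) (mul_nonneg hK0 (sq_nonneg X))
    -- pointwise domination
    have hgh : ∀ y : Set.Icc a b, |(f - f x • e₀ a b) y|
        ≤ (((ε/4 + K * X ^ 2) • e₀ a b + (-(2 * K * X)) • e₁ a b) + K • e₂ a b) y := by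
      intro y
      have h := hfK x y
      have hid : (ε/4 + K * X ^ 2) * 1 + (-(2 * K * X)) * (y:ℝ) + K * (y:ℝ) ^ 2
          = ε/4 + K * ((y:ℝ) - X) ^ 2 := by ring
      simp only [ContinuousMap.sub_apply, ContinuousMap.add_apply, ContinuousMap.smul_apply,
        smul_eq_mul, he0x, he1x, he2x, mul_one]
      rw [mul_one] at hid
      rw [← hXdef] at h
      linarith [h, hid.le, hid.ge]
    have h1 := hAabs (f - f x • e₀ a b)
      (((ε/4 + K * X ^ 2) • e₀ a b + (-(2 * K * X)) • e₁ a b) + K • e₂ a b) t ht x hgh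
    have hI : (∑' n, p n * t ^ n * T n (f - f x • e₀ a b) x)
        = (∑' n, p n * t ^ n * T n f x)
          - f x * ∑' n, p n * t ^ n * T n (e₀ a b) x := by
      have hfe : f - f x • e₀ a b = f + (-(f x)) • e₀ a b := by
        rw [sub_eq_add_neg, ← neg_smul]
      rw [hfe, hAadd f _ t ht x, hAsmul (-(f x)) (e₀ a b) t ht x]
      ring
    have hII : (∑' n, p n * t ^ n *
          T n (((ε/4 + K * X ^ 2) • e₀ a b + (-(2 * K * X)) • e₁ a b) + K • e₂ a b) x)
        = (ε/4 + K * X ^ 2) * (∑' n, p n * t ^ n * T n (e₀ a b) x)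
          + (-(2 * K * X)) * (∑' n, p n * t ^ n * T n (e₁ a b) x)
          + K * (∑' n, p n * t ^ n * T n (e₂ a b) x) := by
      rw [hAadd _ (K • e₂ a b) t ht x, hAadd _ _ t ht x,
        hAsmul (ε/4 + K * X ^ 2) (e₀ a b) t ht x, hAsmul (-(2 * K * X)) (e₁ a b) t ht x,
        hAsmul K (e₂ a b) t ht x]
    rw [hI, hII] at h1
    -- abbreviations
    set Pt : ℝ := ∑' n, p n * t ^ n with hPt
    set Af : ℝ := ∑' n, p n * t ^ n * T n f x with hAf
    set A0 : ℝ := ∑' n, p n * t ^ n * T n (e₀ a b) x with hA0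
    set A1 : ℝ := ∑' n, p n * t ^ n * T n (e₁ a b) x with hA1
    set A2 : ℝ := ∑' n, p n * t ^ n * T n (e₂ a b) x with hA2
    set D0 : ℝ := ⨆ x : Set.Icc a b,
      |(∑' n, p n * t ^ n * T n (e₀ a b) x) / (∑' n, p n * t ^ n) - e₀ a b x| with hD0
    set D1 : ℝ := ⨆ x : Set.Icc a b,
      |(∑' n, p n * t ^ n * T n (e₁ a b) x) / (∑' n, p n * t ^ n) - e₁ a b x| with hD1
    set D2 : ℝ := ⨆ x : Set.Icc a b,
      |(∑' n, p n * t ^ n * T n (e₂ a b) x) / (∑' n, p n * t ^ n) - e₂ a b x| with hD2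
    have d0 : |A0 / Pt - 1| ≤ D0 := by
      have h := le_ciSup (hbdd (e₀ a b) t ht) x
      rw [hD0, hA0, hPt]
      simpa only [he0x] using h
    have d1 : |A1 / Pt - X| ≤ D1 := by
      have h := le_ciSup (hbdd (e₁ a b) t ht) x
      rw [hD1, hA1, hPt, hXdef]
      simpa only [he1x] using h
    have d2 : |A2 / Pt - X ^ 2| ≤ D2 := by
      have h := le_ciSup (hbdd (e₂ a b) t ht) x
      rw [hD2, hA2, hPt, hXdef]
      simpa only [he2x] using h
    have dn0 : 0 ≤ D0 := le_trans (abs_nonneg _) d0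
    have dn1 : 0 ≤ D1 := le_trans (abs_nonneg _) d1
    have dn2 : 0 ≤ D2 := le_trans (abs_nonneg _) d2
    have hs : |f x| ≤ M := by
      have := f.norm_coe_le_norm x
      rwa [Real.norm_eq_abs, ← hM] at this
    have hXc : |X| ≤ c := hxc x
    have hX2 : X ^ 2 ≤ c ^ 2 := by nlinarith [abs_nonneg X, sq_abs X]
    -- chain of estimates
    have step1 : |Af / Pt - f x| ≤ |Af - f x * A0| / Pt + |f x| * |A0 / Pt - 1| := by
      have e : Af / Pt - f x = (Af - f x * A0) / Pt + f x * (A0 / Pt - 1) := by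
        field_simp
        ring
      rw [e]
      refine (abs_add_le _ _).trans ?_
      rw [abs_div, abs_of_pos hP, abs_mul]
    have step2 : |Af - f x * A0| / Pt
        ≤ ((ε/4 + K * X ^ 2) * A0 + (-(2 * K * X)) * A1 + K * A2) / Pt :=
      div_le_div_of_nonneg_right h1 hP.le
    have step3 : ((ε/4 + K * X ^ 2) * A0 + (-(2 * K * X)) * A1 + K * A2) / Pt
        = ε/4 + (ε/4 + K * X ^ 2) * (A0 / Pt - 1) + (-(2 * K * X)) * (A1 / Pt - X)
          + K * (A2 / Pt - X ^ 2) := by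
      field_simp
      ring
    have step4 : (ε/4 + K * X ^ 2) * (A0 / Pt - 1) ≤ (ε/4 + K * c ^ 2) * D0 := by
      calc (ε/4 + K * X ^ 2) * (A0 / Pt - 1)
          ≤ (ε/4 + K * X ^ 2) * |A0 / Pt - 1| :=
            mul_le_mul_of_nonneg_left (le_abs_self _) hα0
        _ ≤ (ε/4 + K * c ^ 2) * D0 := by
            refine mul_le_mul ?_ d0 (abs_nonneg _) ?_
            · nlinarith [mul_le_mul_of_nonneg_left hX2 hK0]
            · nlinarith [mul_nonneg hK0 (sq_nonneg c)]
    have step5 : (-(2 * K * X)) * (A1 / Pt - X) ≤ 2 * K * c * D1 := by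
      have e1 : (-(2 * K * X)) * (A1 / Pt - X) ≤ |2 * K * X| * |A1 / Pt - X| := by
        calc (-(2 * K * X)) * (A1 / Pt - X) ≤ |(-(2 * K * X)) * (A1 / Pt - X)| := le_abs_self _
          _ = |2 * K * X| * |A1 / Pt - X| := by rw [abs_mul, abs_neg]
      refine e1.trans (mul_le_mul ?_ d1 (abs_nonneg _) (by positivity))
      have : |2 * K * X| = 2 * K * |X| := by
        rw [abs_mul, abs_of_nonneg (by linarith : (0:ℝ) ≤ 2 * K)]
      rw [this]
      exact mul_le_mul_of_nonneg_left hXc (by linarith)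
    have step6 : K * (A2 / Pt - X ^ 2) ≤ K * D2 :=
      mul_le_mul_of_nonneg_left ((le_abs_self _).trans d2) hK0
    have step7 : |f x| * |A0 / Pt - 1| ≤ M * D0 :=
      mul_le_mul hs d0 (abs_nonneg _) hM0
    have hfin : |Af / Pt - f x|
        ≤ ε/4 + (ε/4 + K * c ^ 2 + M) * D0 + 2 * K * c * D1 + K * D2 := by
      have s23 := step2.trans_eq step3
      linarith [step1, s23, step4, step5, step6, step7]
    exact hfin
  -- combine with the test-function convergence
  have hD0t := h_test (e₀ a b) (by simp)
  have hD1t := h_test (e₁ a b) (by simp)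
  have hD2t := h_test (e₂ a b) (by simp)
  have hc2 : (0:ℝ) ≤ K * c ^ 2 := mul_nonneg hK0 (sq_nonneg c)
  have hC0 : (0:ℝ) < ε/4 + K * c ^ 2 + M + 1 := by linarith
  have hC1 : (0:ℝ) < 2 * K * c + 1 := by nlinarith [mul_nonneg hK0 hc0]
  have hC2 : (0:ℝ) < K + 1 := by linarith
  have hβ0 : (0:ℝ) < (ε/4) / (ε/4 + K * c ^ 2 + M + 1) := div_pos (by linarith) hC0
  have hβ1 : (0:ℝ) < (ε/4) / (2 * K * c + 1) := div_pos (by linarith) hC1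
  have hβ2 : (0:ℝ) < (ε/4) / (K + 1) := div_pos (by linarith) hC2
  have h0ev := hD0t.eventually (eventually_lt_nhds hβ0)
  have h1ev := hD1t.eventually (eventually_lt_nhds hβ1)
  have h2ev := hD2t.eventually (eventually_lt_nhds hβ2)
  have hIoo : ∀ᶠ t in 𝓝[<] (1:ℝ), t ∈ Set.Ioo (0:ℝ) 1 := by
    filter_upwards [Ioo_mem_nhdsLT_of_mem (⟨zero_lt_one, le_refl (1:ℝ)⟩ : (1:ℝ) ∈ Set.Ioc 0 1)]
      with t ht using ht
  filter_upwards [hIoo, h0ev, h1ev, h2ev] with t htI h0 h1 h2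
  have hk := key t htI
  have Fnn : (0:ℝ) ≤ ⨆ x : Set.Icc a b,
      |(∑' n, p n * t ^ n * T n f x) / (∑' n, p n * t ^ n) - f x| :=
    Real.iSup_nonneg fun x => abs_nonneg _
  rw [Real.dist_eq, sub_zero, abs_of_nonneg Fnn]
  have dn0 : (0:ℝ) ≤ ⨆ x : Set.Icc a b,
      |(∑' n, p n * t ^ n * T n (e₀ a b) x) / (∑' n, p n * t ^ n) - e₀ a b x| :=
    Real.iSup_nonneg fun x => abs_nonneg _
  have dn1 : (0:ℝ) ≤ ⨆ x : Set.Icc a b,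
      |(∑' n, p n * t ^ n * T n (e₁ a b) x) / (∑' n, p n * t ^ n) - e₁ a b x| :=
    Real.iSup_nonneg fun x => abs_nonneg _
  have dn2 : (0:ℝ) ≤ ⨆ x : Set.Icc a b,
      |(∑' n, p n * t ^ n * T n (e₂ a b) x) / (∑' n, p n * t ^ n) - e₂ a b x| :=
    Real.iSup_nonneg fun x => abs_nonneg _
  have b0 : (ε/4 + K * c ^ 2 + M) * (⨆ x : Set.Icc a b,
      |(∑' n, p n * t ^ n * T n (e₀ a b) x) / (∑' n, p n * t ^ n) - e₀ a b x|) < ε/4 := by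
    have e1 : (ε/4 + K * c ^ 2 + M + 1) * (⨆ x : Set.Icc a b,
        |(∑' n, p n * t ^ n * T n (e₀ a b) x) / (∑' n, p n * t ^ n) - e₀ a b x|)
        < (ε/4 + K * c ^ 2 + M + 1) * ((ε/4) / (ε/4 + K * c ^ 2 + M + 1)) :=
      mul_lt_mul_of_pos_left h0 hC0
    have e2 : (ε/4 + K * c ^ 2 + M + 1) * ((ε/4) / (ε/4 + K * c ^ 2 + M + 1)) = ε/4 := by
      field_simp
    nlinarith [dn0]
  have b1 : 2 * K * c * (⨆ x : Set.Icc a b,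
      |(∑' n, p n * t ^ n * T n (e₁ a b) x) / (∑' n, p n * t ^ n) - e₁ a b x|) < ε/4 := by
    have e1 : (2 * K * c + 1) * (⨆ x : Set.Icc a b,
        |(∑' n, p n * t ^ n * T n (e₁ a b) x) / (∑' n, p n * t ^ n) - e₁ a b x|)
        < (2 * K * c + 1) * ((ε/4) / (2 * K * c + 1)) :=
      mul_lt_mul_of_pos_left h1 hC1
    have e2 : (2 * K * c + 1) * ((ε/4) / (2 * K * c + 1)) = ε/4 := by
      field_simp
    nlinarith [dn1]
  have b2 : K * (⨆ x : Set.Icc a b,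
      |(∑' n, p n * t ^ n * T n (e₂ a b) x) / (∑' n, p n * t ^ n) - e₂ a b x|) < ε/4 := by
    have e1 : (K + 1) * (⨆ x : Set.Icc a b,
        |(∑' n, p n * t ^ n * T n (e₂ a b) x) / (∑' n, p n * t ^ n) - e₂ a b x|)
        < (K + 1) * ((ε/4) / (K + 1)) :=
      mul_lt_mul_of_pos_left h2 hC2
    have e2 : (K + 1) * ((ε/4) / (K + 1)) = ε/4 := by
      field_simp
    nlinarith [dn2]
  linarith [hk, b0, b1, b2]
end

section
/- Let T : C[a,b] → C[a,b] be a positive linear operator, f ∈ C[a,b] with ‖f‖ = M, and fix x ∈ [a,b] and δ > 0. Then |T(f)(x) − f(x)| ≤ ε + (M + ε + 2d²M/δ²)|T(e_0)(x) − 1| + (2M/δ²)|T(e_2)(x) − x²| + (4dM/δ²)|T(e_1)(x) − x|, whenever ε > 0 and δ > 0 are such that |f(z) − f(x)| < ε for all z with |z − x| < δ, where d = max{|a|,|b|} and e_0(x)=1, e_1(x)=x, e_2(x)=x². -/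
open Filter Set Topology

/-- Shisha–Mond style pointwise estimate for a positive linear operator `T` on
`C[a,b]`, where `M = ‖f‖`, `d = max {|a|, |b|}`, and `ε, δ > 0` are such that
`|f z - f x| < ε` whenever `|z - x| < δ`. -/
theorem shisha_mond_pointwise (a b : ℝ) (hab : a ≤ b)
    (T : C(Set.Icc a b, ℝ) →ₗ[ℝ] C(Set.Icc a b, ℝ))
    (hT_pos : ∀ f : C(Set.Icc a b, ℝ), (∀ x, 0 ≤ f x) → ∀ x, 0 ≤ T f x)
    (f : C(Set.Icc a b, ℝ)) (M : ℝ) (hM : ‖f‖ = M)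
    (x : Set.Icc a b) (ε δ d : ℝ) (hε : 0 < ε) (hδ : 0 < δ)
    (hd : d = max |a| |b|)
    (hfδ : ∀ z : Set.Icc a b, |(z : ℝ) - (x : ℝ)| < δ → |f z - f x| < ε) :
    |T f x - f x| ≤
      ε + (M + ε + 2 * d ^ 2 * M / δ ^ 2) * |T (e₀ a b) x - 1|
        + 2 * M / δ ^ 2 * |T (e₂ a b) x - (x : ℝ) ^ 2|
        + 4 * d * M / δ ^ 2 * |T (e₁ a b) x - (x : ℝ)| := by
  have hM0 : 0 ≤ M := hM ▸ norm_nonneg f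
  have hfle : ∀ z : Set.Icc a b, |f z| ≤ M := by
    intro z
    calc |f z| = ‖f z‖ := rfl
    _ ≤ ‖f‖ := f.norm_coe_le_norm z
    _ = M := hM
  -- |x| ≤ d
  have hxd : |(x : ℝ)| ≤ d := by
    rcases x.2 with ⟨h1, h2⟩
    rw [hd, abs_le]
    constructor
    · have := neg_abs_le a; exact le_trans (by linarith [le_max_left |a| |b|]) h1
    · exact le_trans h2 (le_trans (le_abs_self b) (le_max_right |a| |b|))
  have hd0 : 0 ≤ d := le_trans (abs_nonneg _) hxd
  -- monotonicity
  have hmono : ∀ g h : C(Set.Icc a b, ℝ), (∀ z, |g z| ≤ h z) → |T g x| ≤ T h x := by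
    intro g h hgh
    rw [abs_le]
    constructor
    · have := hT_pos (h + g) (fun z => by
        have := hgh z; rw [abs_le] at this
        simp only [ContinuousMap.add_apply]; linarith [this.1]) x
      rw [map_add] at this
      simp only [ContinuousMap.add_apply] at this
      linarith
    · have := hT_pos (h - g) (fun z => by
        have := hgh z; rw [abs_le] at this
        simp only [ContinuousMap.sub_apply]; linarith [this.2]) x
      rw [map_sub] at this
      simp only [ContinuousMap.sub_apply] at this
      linarith
  set q : C(Set.Icc a b, ℝ) := ⟨fun z => ((z : ℝ) - (x : ℝ)) ^ 2, by fun_prop⟩ with hq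
  have hqeq : q = e₂ a b + (-(2 * (x : ℝ))) • e₁ a b + ((x : ℝ) ^ 2) • e₀ a b := by
    ext z
    simp [hq, e₀, e₁, e₂]
    ring
  set g : C(Set.Icc a b, ℝ) := f - (f x) • e₀ a b with hg
  set h : C(Set.Icc a b, ℝ) := ε • e₀ a b + (2 * M / δ ^ 2) • q with hh
  have hk0 : 0 ≤ 2 * M / δ ^ 2 := by positivity
  have hbound : ∀ z, |g z| ≤ h z := by
    intro z
    have hgz : g z = f z - f x := by simp [hg, e₀]
    have hhz : h z = ε + 2 * M / δ ^ 2 * ((z : ℝ) - (x : ℝ)) ^ 2 := by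
      simp [hh, hq, e₀]
    rw [hgz, hhz]
    by_cases hc : |(z : ℝ) - (x : ℝ)| < δ
    · have := hfδ z hc
      nlinarith [sq_nonneg ((z : ℝ) - (x : ℝ))]
    · push_neg at hc
      have h1 : δ ^ 2 ≤ ((z : ℝ) - (x : ℝ)) ^ 2 := by
        have := sq_abs ((z : ℝ) - (x : ℝ))
        nlinarith
      have h2 : |f z - f x| ≤ 2 * M := by
        have := hfle z; have := hfle x
        calc |f z - f x| ≤ |f z| + |f x| := abs_sub _ _
        _ ≤ 2 * M := by linarith
      have h3 : 2 * M ≤ 2 * M / δ ^ 2 * ((z : ℝ) - (x : ℝ)) ^ 2 := by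
        rw [div_mul_eq_mul_div, le_div_iff₀ (by positivity)]
        nlinarith
      linarith
  have key := hmono g h hbound
  -- compute T g x and T h x
  have hTg : T g x = T f x - f x * T (e₀ a b) x := by
    rw [hg, map_sub, map_smul]
    simp
  have hTq : T q x = T (e₂ a b) x - 2 * (x : ℝ) * T (e₁ a b) x
      + (x : ℝ) ^ 2 * T (e₀ a b) x := by
    rw [hqeq, map_add, map_add, map_smul, map_smul]
    simp; ring
  have hTh : T h x = ε * T (e₀ a b) x + 2 * M / δ ^ 2 * T q x := by
    rw [hh, map_add, map_smul, map_smul]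
    simp
  rw [hTg, hTh, hTq] at key
  clear_value q g h
  clear hbound hTg hTh hTq hqeq hmono hfδ hT_pos hq hh hg q g h
  -- abbreviations
  set A := T (e₀ a b) x - 1 with hA
  set B := T (e₁ a b) x - (x : ℝ) with hB
  set C := T (e₂ a b) x - (x : ℝ) ^ 2 with hC
  clear_value A B C
  have hTe0 : T (e₀ a b) x = A + 1 := by rw [hA]; ring
  have habs : |T f x - f x| ≤ |T f x - f x * T (e₀ a b) x| + |f x| * |A| := by
    calc |T f x - f x| = |(T f x - f x * T (e₀ a b) x) + f x * A| := by
          rw [hA]; ring_nf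
    _ ≤ |T f x - f x * T (e₀ a b) x| + |f x * A| := abs_add_le _ _
    _ = _ := by rw [abs_mul]
  have hfxM : |f x| ≤ M := hfle x
  have hA0 : 0 ≤ |A| := abs_nonneg _
  have hB0 : 0 ≤ |B| := abs_nonneg _
  have hC0 : 0 ≤ |C| := abs_nonneg _
  -- bound the main term
  have hexpand : T (e₂ a b) x - 2 * (x : ℝ) * T (e₁ a b) x + (x : ℝ) ^ 2 * T (e₀ a b) x
      = C - 2 * (x : ℝ) * B + (x : ℝ) ^ 2 * A := by
    rw [hA, hB, hC]; ring
  have hqbound : C - 2 * (x : ℝ) * B + (x : ℝ) ^ 2 * A ≤ |C| + 2 * d * |B| + d ^ 2 * |A| := by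
    have h1 : C ≤ |C| := le_abs_self _
    have h2 : -(2 * (x : ℝ) * B) ≤ 2 * d * |B| := by
      have : |2 * (x : ℝ) * B| ≤ 2 * d * |B| := by
        rw [abs_mul, abs_mul, abs_two]
        have := mul_le_mul_of_nonneg_right hxd hB0
        nlinarith
      linarith [neg_abs_le (2 * (x : ℝ) * B)]
    have h3 : (x : ℝ) ^ 2 * A ≤ d ^ 2 * |A| := by
      have hx2 : (x : ℝ) ^ 2 ≤ d ^ 2 := by
        rw [← sq_abs]; exact pow_le_pow_left₀ (abs_nonneg _) hxd 2
      calc (x : ℝ) ^ 2 * A ≤ (x : ℝ) ^ 2 * |A| :=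
            mul_le_mul_of_nonneg_left (le_abs_self A) (sq_nonneg _)
      _ ≤ d ^ 2 * |A| := mul_le_mul_of_nonneg_right hx2 hA0
    linarith
  have hεterm : ε * T (e₀ a b) x ≤ ε + ε * |A| := by
    rw [hTe0, mul_add, mul_one]
    linarith [mul_le_mul_of_nonneg_left (le_abs_self A) hε.le]
  have hmain : |T f x - f x * T (e₀ a b) x| ≤
      ε + ε * |A| + 2 * M / δ ^ 2 * (|C| + 2 * d * |B| + d ^ 2 * |A|) := by
    rw [hexpand] at key
    have := mul_le_mul_of_nonneg_left hqbound hk0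
    linarith
  have heq : ε + (M + ε + 2 * d ^ 2 * M / δ ^ 2) * |A| + 2 * M / δ ^ 2 * |C|
      + 4 * d * M / δ ^ 2 * |B|
      = ε + ε * |A| + 2 * M / δ ^ 2 * (|C| + 2 * d * |B| + d ^ 2 * |A|) + M * |A| := by
    field_simp
    ring
  rw [heq]
  linarith [mul_le_mul_of_nonneg_right hfxM hA0]
end

section
/- Let T : C[a,b] → C[a,b] be a positive linear operator, f ∈ C[a,b], x ∈ [a,b], and δ > 0. Then |T(f)(x) − f(x)| ≤ ‖f‖ |T(e_0)(x) − 1| + (T(e_0)(x) + δ^{-2} T(φ_x)(x)) ω₁(f; δ), where φ_x(z) = (z − x)² and ω₁ is the modulus of continuity of f. -/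
open Filter Set Topology

/-- The test function `φₓ(z) = (z - x)²` on `[a, b]`. -/
def φ (a b : ℝ) (x : Set.Icc a b) : C(Set.Icc a b, ℝ) :=
  ⟨fun z => ((z : ℝ) - (x : ℝ)) ^ 2, by fun_prop⟩

@[simp]
theorem e₀_apply (a b : ℝ) (z : Set.Icc a b) : e₀ a b z = 1 := rfl

@[simp]
theorem φ_apply (a b : ℝ) (x z : Set.Icc a b) : φ a b x z = ((z : ℝ) - x) ^ 2 := rfl

theorem natCeil_le_one_add_sq (r : ℝ) : (⌈r⌉₊ : ℝ) ≤ 1 + r ^ 2 := by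
  rcases le_or_gt r 1 with hr | hr
  · have : (⌈r⌉₊ : ℝ) ≤ 1 := by exact_mod_cast Nat.ceil_le.mpr (by simpa using hr)
    linarith [sq_nonneg r]
  · nlinarith [Nat.ceil_lt_add_one (by linarith : (0 : ℝ) ≤ r)]

section ModulusOfContinuity

variable {s : Set ℝ} {f : s → ℝ} {δ w : ℝ}

theorem abs_sub_le_natCast_mul_of_convex (hs : Convex ℝ s)
    (hf : ∀ u v : s, |(v : ℝ) - u| ≤ δ → |f v - f u| ≤ w) (n : ℕ) (u v : s)
    (huv : |(v : ℝ) - u| ≤ n * δ) : |f v - f u| ≤ n * w := by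
  induction n generalizing v with
  | zero =>
    obtain rfl : v = u := Subtype.ext (by simpa [sub_eq_zero] using huv)
    simp
  | succ n ih =>
    -- split `[u, v]` at the point `p` with `p - u = n/(n+1) (v - u)`
    have hn : (0 : ℝ) < n + 1 := by positivity
    set t : ℝ := n / (n + 1)
    have ht : 1 - t = 1 / (n + 1) := by simp only [t]; field_simp; ring
    have hp : (1 - t) * u + t * v ∈ s :=
      hs u.2 v.2 (by rw [ht]; positivity) (by positivity) (by ring)
    set p : s := ⟨_, hp⟩
    have huv' : |(v : ℝ) - u| ≤ (n + 1) * δ := by exact_mod_cast huv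
    have hpu : |(p : ℝ) - u| ≤ n * δ := by
      calc |(p : ℝ) - u| = t * |(v : ℝ) - u| := by
            rw [show (p : ℝ) - u = t * (v - u) by simp only [p]; ring, abs_mul,
              abs_of_nonneg (by positivity)]
        _ ≤ t * ((n + 1) * δ) := by gcongr
        _ = n * δ := by simp only [t]; field_simp
    have hvp : |(v : ℝ) - p| ≤ δ := by
      calc |(v : ℝ) - p| = (1 - t) * |(v : ℝ) - u| := by
            rw [show (v : ℝ) - p = (1 - t) * (v - u) by simp only [p]; ring, abs_mul,
              abs_of_nonneg (by rw [ht]; positivity)]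
        _ ≤ (1 - t) * ((n + 1) * δ) := by gcongr; rw [ht]; positivity
        _ = δ := by rw [ht]; field_simp
    calc |f v - f u| ≤ |f v - f p| + |f p - f u| := abs_sub_le _ _ _
      _ ≤ w + n * w := add_le_add (hf p v hvp) (ih p hpu)
      _ = (n + 1 : ℕ) * w := by push_cast; ring

theorem abs_sub_le_mul_one_add_sq_of_convex (hs : Convex ℝ s) (hδ : 0 < δ)
    (hf : ∀ u v : s, |(v : ℝ) - u| ≤ δ → |f v - f u| ≤ w) (x z : s) :
    |f z - f x| ≤ w * (1 + δ⁻¹ ^ 2 * ((z : ℝ) - x) ^ 2) := by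
  have hw : 0 ≤ w := by simpa using hf x x (by simpa using hδ.le)
  set r := |(z : ℝ) - x| / δ
  have hzx : |(z : ℝ) - x| ≤ ⌈r⌉₊ * δ := by
    rw [← div_le_iff₀ hδ]
    exact Nat.le_ceil r
  calc |f z - f x| ≤ ⌈r⌉₊ * w := abs_sub_le_natCast_mul_of_convex hs hf _ x z hzx
    _ ≤ (1 + r ^ 2) * w := by gcongr; exact natCeil_le_one_add_sq r
    _ = w * (1 + δ⁻¹ ^ 2 * ((z : ℝ) - x) ^ 2) := by
      simp only [r, div_pow, sq_abs]; ring

end ModulusOfContinuity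

theorem abs_sub_le_sSup_of_abs_sub_le {s : Set ℝ} [CompactSpace s] (f : C(s, ℝ)) {δ : ℝ}
    {u v : s} (huv : |(v : ℝ) - u| ≤ δ) :
    |f v - f u| ≤ sSup {y : ℝ | ∃ u v : s, |(v : ℝ) - (u : ℝ)| ≤ δ ∧ y = |f v - f u|} := by
  refine le_csSup ⟨2 * ‖f‖, ?_⟩ ⟨u, v, huv, rfl⟩
  rintro y ⟨u, v, -, rfl⟩
  calc |f v - f u| ≤ |f v| + |f u| := abs_sub _ _
    _ ≤ ‖f‖ + ‖f‖ := add_le_add (f.norm_coe_le_norm v) (f.norm_coe_le_norm u)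
    _ = 2 * ‖f‖ := by ring

theorem abs_apply_le_of_abs_le {X : Type*} [TopologicalSpace X] (T : C(X, ℝ) →ₗ[ℝ] C(X, ℝ))
    (hT_pos : ∀ f : C(X, ℝ), (∀ x, 0 ≤ f x) → ∀ x, 0 ≤ T f x) {g h : C(X, ℝ)}
    (hgh : ∀ z, |g z| ≤ h z) (x : X) : |T g x| ≤ T h x := by
  have hsub := hT_pos (h - g) (fun z => by simpa using (abs_le.mp (hgh z)).2) x
  have hadd := hT_pos (h + g)
    (fun z => by simpa using neg_le_iff_add_nonneg'.mp (abs_le.mp (hgh z)).1) x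
  simp only [map_sub, map_add, ContinuousMap.sub_apply, ContinuousMap.add_apply] at hsub hadd
  exact abs_le.mpr ⟨by linarith, by linarith⟩

theorem shisha_mond_modulus_general (a b : ℝ)
    (T : C(Set.Icc a b, ℝ) →ₗ[ℝ] C(Set.Icc a b, ℝ))
    (hT_pos : ∀ f : C(Set.Icc a b, ℝ), (∀ x, 0 ≤ f x) → ∀ x, 0 ≤ T f x)
    (f : C(Set.Icc a b, ℝ)) (x : Set.Icc a b) (δ : ℝ) (hδ : 0 < δ)
    (ω : ℝ → ℝ)
    (hω : ∀ s : ℝ, ω s =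
      sSup {y : ℝ | ∃ u v : Set.Icc a b, |(v : ℝ) - (u : ℝ)| ≤ s ∧ y = |f v - f u|}) :
    |T f x - f x| ≤
      ‖f‖ * |T (e₀ a b) x - 1| + (T (e₀ a b) x + δ⁻¹ ^ 2 * T (φ a b x) x) * ω δ := by
  have hmajor : ∀ z, |(f - f x • e₀ a b) z| ≤ (ω δ • (e₀ a b + δ⁻¹ ^ 2 • φ a b x)) z := by
    intro z
    simpa [mul_add] using abs_sub_le_mul_one_add_sq_of_convex (convex_Icc a b) hδ
      (fun u v huv => (hω δ).symm ▸ abs_sub_le_sSup_of_abs_sub_le f huv) x z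
  have hT := abs_apply_le_of_abs_le T hT_pos hmajor x
  simp only [map_sub, map_smul, map_add, ContinuousMap.sub_apply, ContinuousMap.smul_apply,
    ContinuousMap.add_apply, smul_eq_mul] at hT
  have hfx : |f x| ≤ ‖f‖ := f.norm_coe_le_norm x
  calc |T f x - f x| = |(T f x - f x * T (e₀ a b) x) + f x * (T (e₀ a b) x - 1)| := by
        congr 1; ring
    _ ≤ |T f x - f x * T (e₀ a b) x| + |f x| * |T (e₀ a b) x - 1| := by
      rw [← abs_mul]; exact abs_add_le _ _
    _ ≤ ω δ * (T (e₀ a b) x + δ⁻¹ ^ 2 * T (φ a b x) x) + ‖f‖ * |T (e₀ a b) x - 1| := by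
      gcongr
    _ = ‖f‖ * |T (e₀ a b) x - 1| + (T (e₀ a b) x + δ⁻¹ ^ 2 * T (φ a b x) x) * ω δ := by ring

/-- Quantitative Korovkin (Shisha–Mond) inequality via the modulus of
continuity: for a positive linear operator `T` on `C[a,b]`,
`|T f x - f x| ≤ ‖f‖ |T e₀ x - 1| + (T e₀ x + δ⁻² T φₓ x) ω₁(f; δ)`. -/
theorem shisha_mond_modulus (a b : ℝ) (hab : a ≤ b)
    (T : C(Set.Icc a b, ℝ) →ₗ[ℝ] C(Set.Icc a b, ℝ))
    (hT_pos : ∀ f : C(Set.Icc a b, ℝ), (∀ x, 0 ≤ f x) → ∀ x, 0 ≤ T f x)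
    (f : C(Set.Icc a b, ℝ)) (x : Set.Icc a b) (δ : ℝ) (hδ : 0 < δ)
    (ω : ℝ → ℝ)
    (hω : ∀ s : ℝ, ω s =
      sSup {y : ℝ | ∃ u v : Set.Icc a b, |(v : ℝ) - (u : ℝ)| ≤ s ∧ y = |f v - f u|}) :
    |T f x - f x| ≤
      ‖f‖ * |T (e₀ a b) x - 1| + (T (e₀ a b) x + δ⁻¹ ^ 2 * T (φ a b x) x) * ω δ :=
  shisha_mond_modulus_general a b T hT_pos f x δ hδ ω hω
end

section
/- With T_i(f) = (1 + x_i) B_i(f) as above (B_i the Bernstein operators on C[0,1], x_i the indicator of perfect cubes), for each test function e_k (k = 0, 1, 2) one has lim_{t→1⁻} (1−t) Σ_{i=1}^∞ t^{i−1} ‖T_i(e_k) − e_k‖ = 0, even though the sequence ‖T_i(e_0) − e_0‖ = x_i does not converge to 0. -/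
open Filter Set Topology unitInterval

/-- The classical Bernstein operator `Bᵢ` on `C[0,1]`, as a pointwise formula. -/
noncomputable def bernsteinOp (i : ℕ) (f : C(unitInterval, ℝ)) (x : unitInterval) : ℝ :=
  ∑ j : Fin (i + 1), (i.choose j : ℝ) * (x : ℝ) ^ (j : ℕ) * (1 - (x : ℝ)) ^ (i - (j : ℕ)) *
    f ⟨(j : ℝ) / (i : ℝ), by
      constructor
      · positivity
      · rcases Nat.eq_zero_or_pos i with h | h
        · simp [h]
        · rw [div_le_one (by exact_mod_cast h)]
          exact_mod_cast Nat.lt_succ_iff.mp j.isLt⟩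

lemma bernsteinOp_apply (i : ℕ) (f : C(unitInterval, ℝ)) (x : unitInterval) :
    bernsteinOp i f x = ∑ k : Fin (i + 1), bernstein i k x * f (bernstein.z k) := by
  refine Finset.sum_congr rfl fun k _ => ?_
  rw [bernstein_apply]
  rfl

lemma moment1 {i : ℕ} (x : unitInterval) :
    (∑ k : Fin (i + 1), ((k : ℕ) : ℝ) * bernstein i k x) = i * x := by
  have h := bernsteinPolynomial.sum_smul ℝ i
  apply_fun fun p => Polynomial.aeval (x : ℝ) p at h
  simp only [Finset.sum_range, map_sum, Polynomial.coe_aeval_eq_eval, nsmul_eq_mul,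
    Polynomial.eval_mul, Polynomial.eval_natCast, Polynomial.eval_X] at h
  exact h

lemma moment2' {i : ℕ} (x : unitInterval) :
    (∑ k : Fin (i + 1), (((k : ℕ) * ((k : ℕ) - 1) : ℕ) : ℝ) * bernstein i k x)
      = ((i * (i - 1) : ℕ) : ℝ) * (x : ℝ) ^ 2 := by
  have h := bernsteinPolynomial.sum_mul_smul ℝ i
  apply_fun fun p => Polynomial.aeval (x : ℝ) p at h
  simp only [Finset.sum_range, map_sum, Polynomial.coe_aeval_eq_eval, nsmul_eq_mul,
    Polynomial.eval_mul, Polynomial.eval_natCast, Polynomial.eval_X, Polynomial.eval_pow] at h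
  exact h

lemma moment2 {i : ℕ} (x : unitInterval) :
    (∑ k : Fin (i + 1), ((k : ℕ) : ℝ) ^ 2 * bernstein i k x)
      = ((i * (i - 1) : ℕ) : ℝ) * (x : ℝ) ^ 2 + i * x := by
  rw [← moment2' x, ← moment1 x, ← Finset.sum_add_distrib]
  refine Finset.sum_congr rfl fun k _ => ?_
  rw [← add_mul]
  congr 1
  have : ((k : ℕ) * ((k : ℕ) - 1) : ℕ) + (k : ℕ) = (k : ℕ) ^ 2 := by
    cases h : (k : ℕ) with
    | zero => simp
    | succ m => simp [h]; ring
  have h2 := congrArg (fun n : ℕ => (n : ℝ)) this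
  push_cast at h2 ⊢
  linarith [h2]

lemma bern_e0 (i : ℕ) (x : unitInterval) :
    bernsteinOp i (ContinuousMap.const _ 1) x = 1 := by
  rw [bernsteinOp_apply]
  simpa using bernstein.probability i x

lemma bern_e1 {i : ℕ} (hi : 1 ≤ i) (x : unitInterval) :
    bernsteinOp i ⟨fun z => (z : ℝ), by fun_prop⟩ x = (x : ℝ) := by
  have hi' : (i : ℝ) ≠ 0 := by positivity
  rw [bernsteinOp_apply]
  have : ∀ k : Fin (i + 1),
      bernstein i k x * ((⟨fun z => (z : ℝ), by fun_prop⟩ : C(unitInterval, ℝ)) (bernstein.z k))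
        = (((k : ℕ) : ℝ) * bernstein i k x) / i := by
    intro k
    show bernstein i k x * ((k : ℝ) / i) = _
    ring
  rw [Finset.sum_congr rfl fun k _ => this k, ← Finset.sum_div, moment1]
  field_simp

lemma bern_e2 {i : ℕ} (hi : 1 ≤ i) (x : unitInterval) :
    bernsteinOp i ⟨fun z => (z : ℝ) ^ 2, by fun_prop⟩ x
      = (x : ℝ) ^ 2 + (x : ℝ) * (1 - (x : ℝ)) / i := by
  have hi' : (i : ℝ) ≠ 0 := by positivity
  rw [bernsteinOp_apply]
  have : ∀ k : Fin (i + 1),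
      bernstein i k x * ((⟨fun z => (z : ℝ) ^ 2, by fun_prop⟩ : C(unitInterval, ℝ)) (bernstein.z k))
        = (((k : ℕ) : ℝ) ^ 2 * bernstein i k x) / (i : ℝ) ^ 2 := by
    intro k
    show bernstein i k x * ((k : ℝ) / i) ^ 2 = _
    field_simp
  rw [Finset.sum_congr rfl fun k _ => this k, ← Finset.sum_div, moment2]
  have hc : ((i * (i - 1) : ℕ) : ℝ) = (i : ℝ) ^ 2 - i := by
    push_cast [Nat.cast_sub hi]
    ring
  rw [hc]
  field_simp
  ring

open Classical in
/-- The indicator of perfect cubes. -/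
noncomputable def cubeInd (i : ℕ) : ℝ := if ∃ m : ℕ, 0 < m ∧ m ^ 3 = i then 1 else 0

/-- The perturbed Bernstein operators `Tᵢ(f) = (1 + xᵢ) Bᵢ(f)`. -/
noncomputable def perturbedBernstein (i : ℕ) (f : C(unitInterval, ℝ)) (x : unitInterval) : ℝ :=
  (1 + cubeInd i) * bernsteinOp i f x

lemma cubeInd_nonneg (i : ℕ) : 0 ≤ cubeInd i := by
  unfold cubeInd; split <;> norm_num

lemma cubeInd_le_one (i : ℕ) : cubeInd i ≤ 1 := by
  unfold cubeInd; split <;> norm_num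

lemma cubeInd_cube (m : ℕ) : cubeInd ((m + 1) ^ 3) = 1 := by
  unfold cubeInd
  rw [if_pos ⟨m + 1, Nat.succ_pos m, rfl⟩]

lemma cube_inj : Function.Injective (fun m : ℕ => (m + 1) ^ 3 - 1) := by
  intro a b h
  simp only at h
  have ha : 1 ≤ (a + 1) ^ 3 := Nat.one_le_iff_ne_zero.2 (by positivity)
  have hb : 1 ≤ (b + 1) ^ 3 := Nat.one_le_iff_ne_zero.2 (by positivity)
  have : (a + 1) ^ 3 = (b + 1) ^ 3 := by omega
  have := Nat.pow_left_injective (by norm_num : (3:ℕ) ≠ 0) this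
  omega

lemma cubeInd_of_not_cube {n : ℕ} (h : n ∉ Set.range (fun m : ℕ => (m + 1) ^ 3 - 1)) :
    cubeInd (n + 1) = 0 := by
  unfold cubeInd
  rw [if_neg]
  rintro ⟨m, hm, hmn⟩
  refine h ⟨m - 1, ?_⟩
  have hm1 : m - 1 + 1 = m := by omega
  simp only [hm1]
  omega

lemma summable_ind (N : ℕ) : Summable (fun m : ℕ => if m < N then (1 : ℝ) else 0) := by
  apply summable_of_ne_finset_zero (s := Finset.range N)
  intro m hm
  rw [Finset.mem_range] at hm
  simp [hm]

lemma tsum_ind (N : ℕ) : (∑' m : ℕ, if m < N then (1 : ℝ) else 0) = N := by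
  rw [tsum_eq_sum (s := Finset.range N) (by intro m hm; rw [Finset.mem_range] at hm; simp [hm])]
  rw [Finset.sum_congr rfl (fun m hm => if_pos (Finset.mem_range.1 hm))]
  simp

lemma abel_cube :
    Tendsto (fun t : ℝ => (1 - t) * ∑' n : ℕ, t ^ n * cubeInd (n + 1)) (𝓝[<] (1 : ℝ)) (𝓝 0) := by
  rw [Metric.tendsto_nhds]
  intro ε hε
  obtain ⟨N, hN⟩ := exists_nat_gt (max 1 (2 / ε))
  have hN1 : 1 ≤ N := by
    have := (le_max_left 1 (2/ε)).trans_lt hN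
    exact_mod_cast this.le
  have hNe : 1 / (N : ℝ) < ε / 2 := by
    have h2 : (2 / ε) < N := (le_max_right _ _).trans_lt hN
    have hNpos : (0 : ℝ) < N := by positivity
    rw [div_lt_iff₀ hε] at h2
    rw [div_lt_iff₀ hNpos]
    nlinarith
  set k := N ^ 2 with hk
  have hk1 : 1 ≤ k := Nat.one_le_iff_ne_zero.2 (by positivity)
  set S : ℝ → ℝ := fun t => ∑ j ∈ Finset.range k, t ^ j with hSdef
  have hS1 : S 1 = k := by simp [hSdef]
  have hlim : Tendsto (fun t : ℝ => (1 - t) * N + (S t)⁻¹) (𝓝[<] (1 : ℝ))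
      (𝓝 ((1 - 1) * N + ((k : ℝ))⁻¹)) := by
    apply Tendsto.mono_left _ nhdsWithin_le_nhds
    have hc1 : Continuous fun t : ℝ => (1 - t) * N := by continuity
    have hc2 : Continuous S := by
      apply continuous_finset_sum
      intro j _
      exact continuous_pow j
    have : ContinuousAt (fun t : ℝ => (1 - t) * N + (S t)⁻¹) 1 := by
      apply (hc1.continuousAt).add
      apply hc2.continuousAt.inv₀
      rw [hS1]
      positivity
    have h15 : ((1:ℝ) - 1) * N + ((k:ℝ))⁻¹ = (fun t : ℝ => (1 - t) * N + (S t)⁻¹) 1 := by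
      simp [hS1]
    rw [h15]
    exact this
  have hval : (1 - 1 : ℝ) * N + ((k : ℝ))⁻¹ < ε := by
    have hkN : (N : ℝ) ≤ k := by exact_mod_cast Nat.le_self_pow two_ne_zero N
    have : ((k : ℝ))⁻¹ ≤ 1 / N := by
      rw [one_div]
      exact inv_anti₀ (by positivity) hkN
    nlinarith
  have hev1 : ∀ᶠ t in 𝓝[<] (1 : ℝ), (1 - t) * N + (S t)⁻¹ < ε :=
    hlim.eventually_lt_const hval
  have hev2 : Ioo (0 : ℝ) 1 ∈ 𝓝[<] (1 : ℝ) :=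
    Ioo_mem_nhdsLT_of_mem (by constructor <;> norm_num)
  filter_upwards [hev1, hev2] with t hlt ht
  obtain ⟨ht0, ht1⟩ := ht
  rw [Real.dist_eq, sub_zero]
  have h1t : (0 : ℝ) < 1 - t := by linarith
  -- summability facts
  have htk0 : (0 : ℝ) ≤ t ^ k := by positivity
  have htk1 : t ^ k < 1 := pow_lt_one₀ ht0.le ht1 (by omega)
  have hgeom : Summable (fun m : ℕ => (t ^ k) ^ m) := summable_geometric_of_lt_one htk0 htk1
  set b : ℕ → ℝ := fun m => (if m < N then (1 : ℝ) else 0) + (t ^ k) ^ m with hbdef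
  have hb : Summable b := (summable_ind N).add hgeom
  have hle : ∀ m : ℕ, t ^ ((m + 1) ^ 3 - 1) ≤ b m := by
    intro m
    rcases lt_or_ge m N with hmN | hmN
    · have h01 : t ^ ((m + 1) ^ 3 - 1) ≤ 1 := pow_le_one₀ ht0.le ht1.le
      have h02 : (0:ℝ) ≤ (t ^ k) ^ m := by positivity
      simp only [hbdef, if_pos hmN]
      linarith
    · have hexp : k * m ≤ (m + 1) ^ 3 - 1 := by
        have h1 : k * m ≤ m ^ 3 := by
          calc k * m = N * N * m := by rw [hk]; ring
          _ ≤ m * m * m := by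
            apply Nat.mul_le_mul (Nat.mul_le_mul hmN hmN) le_rfl
          _ = m ^ 3 := by ring
        have h2 : m ^ 3 + 1 ≤ (m + 1) ^ 3 := by nlinarith
        omega
      calc t ^ ((m + 1) ^ 3 - 1) ≤ t ^ (k * m) :=
            pow_le_pow_of_le_one ht0.le ht1.le hexp
      _ = (t ^ k) ^ m := by rw [pow_mul]
      _ ≤ b m := by
          simp only [hbdef, if_neg (not_lt.2 hmN)]
          simp
  have hsub : Summable (fun m : ℕ => t ^ ((m + 1) ^ 3 - 1)) :=
    hb.of_nonneg_of_le (fun m => by positivity) hle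
  -- reindex
  have key : (∑' n : ℕ, t ^ n * cubeInd (n + 1)) = ∑' m : ℕ, t ^ ((m + 1) ^ 3 - 1) := by
    rw [← Function.Injective.tsum_eq cube_inj
      (f := fun n => t ^ n * cubeInd (n + 1)) (by
        intro n hn
        by_contra hmem
        exact hn (by simp only; rw [cubeInd_of_not_cube hmem, mul_zero]))]
    congr 1
    funext m
    have : (m + 1) ^ 3 - 1 + 1 = (m + 1) ^ 3 := by
      have : 1 ≤ (m + 1) ^ 3 := Nat.one_le_iff_ne_zero.2 (by positivity)
      omega
    simp only [this, cubeInd_cube, mul_one]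
  have hbound : (∑' n : ℕ, t ^ n * cubeInd (n + 1)) ≤ N + (1 - t ^ k)⁻¹ := by
    rw [key]
    calc (∑' m : ℕ, t ^ ((m + 1) ^ 3 - 1)) ≤ ∑' m, b m := Summable.tsum_le_tsum hle hsub hb
    _ = (∑' m : ℕ, if m < N then (1:ℝ) else 0) + ∑' m : ℕ, (t ^ k) ^ m :=
        Summable.tsum_add (summable_ind N) hgeom
    _ = N + (1 - t ^ k)⁻¹ := by
        rw [tsum_ind, tsum_geometric_of_lt_one htk0 htk1]
  have hnn : 0 ≤ (∑' n : ℕ, t ^ n * cubeInd (n + 1)) :=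
    tsum_nonneg fun n => mul_nonneg (by positivity) (cubeInd_nonneg _)
  have hSpos : 0 < S t := by
    have : (1 - t) * S t = 1 - t ^ k := by
      have := geom_sum_mul t k
      have h2 : S t * (t - 1) = t ^ k - 1 := this
      nlinarith [h2]
    nlinarith
  have hfrac : (1 - t) * (1 - t ^ k)⁻¹ = (S t)⁻¹ := by
    have hid : (1 - t) * S t = 1 - t ^ k := by
      have h2 : S t * (t - 1) = t ^ k - 1 := geom_sum_mul t k
      nlinarith [h2]
    rw [← hid, mul_inv, ← mul_assoc, mul_inv_cancel₀ (ne_of_gt h1t), one_mul]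
  have habs : |(1 - t) * ∑' n : ℕ, t ^ n * cubeInd (n + 1)| =
      (1 - t) * ∑' n : ℕ, t ^ n * cubeInd (n + 1) :=
    abs_of_nonneg (mul_nonneg h1t.le hnn)
  rw [habs]
  calc (1 - t) * ∑' n : ℕ, t ^ n * cubeInd (n + 1)
      ≤ (1 - t) * (N + (1 - t ^ k)⁻¹) := by
        exact mul_le_mul_of_nonneg_left hbound h1t.le
    _ = (1 - t) * N + (1 - t) * (1 - t ^ k)⁻¹ := by ring
    _ = (1 - t) * N + (S t)⁻¹ := by rw [hfrac]
    _ < ε := hlt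

lemma abel_harm :
    Tendsto (fun t : ℝ => (1 - t) * ∑' n : ℕ, t ^ n * ((n : ℝ) + 1)⁻¹) (𝓝[<] (1 : ℝ)) (𝓝 0) := by
  rw [Metric.tendsto_nhds]
  intro ε hε
  obtain ⟨N, hN⟩ := exists_nat_gt (max 1 (2 / ε))
  have hN1 : 1 ≤ N := by
    have := (le_max_left 1 (2/ε)).trans_lt hN
    exact_mod_cast this.le
  have hNpos : (0 : ℝ) < N := by positivity
  have hNe : 1 / (N : ℝ) < ε / 2 := by
    have h2 : (2 / ε) < N := (le_max_right _ _).trans_lt hN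
    rw [div_lt_iff₀ hε] at h2
    rw [div_lt_iff₀ hNpos]
    nlinarith
  have hlim : Tendsto (fun t : ℝ => (1 - t) * N + 1 / N) (𝓝[<] (1 : ℝ))
      (𝓝 ((1 - 1) * N + 1 / N)) := by
    apply Tendsto.mono_left _ nhdsWithin_le_nhds
    exact (Continuous.tendsto (by continuity) 1)
  have hev1 : ∀ᶠ t in 𝓝[<] (1 : ℝ), (1 - t) * N + 1 / N < ε :=
    hlim.eventually_lt_const (by nlinarith)
  have hev2 : Ioo (0 : ℝ) 1 ∈ 𝓝[<] (1 : ℝ) :=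
    Ioo_mem_nhdsLT_of_mem (by constructor <;> norm_num)
  filter_upwards [hev1, hev2] with t hlt ht
  obtain ⟨ht0, ht1⟩ := ht
  rw [Real.dist_eq, sub_zero]
  have h1t : (0 : ℝ) < 1 - t := by linarith
  have hgeom : Summable (fun n : ℕ => t ^ n) := summable_geometric_of_lt_one ht0.le ht1
  set b : ℕ → ℝ := fun n => (if n < N then (1 : ℝ) else 0) + (1 / N) * t ^ n with hbdef
  have hb : Summable b := (summable_ind N).add (hgeom.mul_left _)
  have hle : ∀ n : ℕ, t ^ n * ((n : ℝ) + 1)⁻¹ ≤ b n := by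
    intro n
    have hn1 : (0 : ℝ) < (n : ℝ) + 1 := by positivity
    rcases lt_or_ge n N with hnN | hnN
    · have h01 : t ^ n ≤ 1 := pow_le_one₀ ht0.le ht1.le
      have h02 : ((n : ℝ) + 1)⁻¹ ≤ 1 := by
        rw [inv_le_one_iff₀]; right; linarith
      have h03 : (0:ℝ) ≤ (1 / N) * t ^ n := by positivity
      have : t ^ n * ((n : ℝ) + 1)⁻¹ ≤ 1 := by
        calc t ^ n * ((n : ℝ) + 1)⁻¹ ≤ 1 * 1 :=
          mul_le_mul h01 h02 (by positivity) one_pos.le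
        _ = 1 := by ring
      simp only [hbdef, if_pos hnN]
      linarith
    · have h04 : ((n : ℝ) + 1)⁻¹ ≤ 1 / N := by
        rw [one_div]
        apply inv_anti₀ hNpos
        have : (N : ℝ) ≤ n := by exact_mod_cast hnN
        linarith
      simp only [hbdef, if_neg (not_lt.2 hnN)]
      have : t ^ n * ((n : ℝ) + 1)⁻¹ ≤ t ^ n * (1 / N) :=
        mul_le_mul_of_nonneg_left h04 (by positivity)
      nlinarith
  have hsub : Summable (fun n : ℕ => t ^ n * ((n : ℝ) + 1)⁻¹) :=
    hb.of_nonneg_of_le (fun n => by positivity) hle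
  have hbound : (∑' n : ℕ, t ^ n * ((n : ℝ) + 1)⁻¹) ≤ N + (1 / N) * (1 - t)⁻¹ := by
    calc (∑' n : ℕ, t ^ n * ((n : ℝ) + 1)⁻¹) ≤ ∑' n, b n := Summable.tsum_le_tsum hle hsub hb
    _ = (∑' n : ℕ, if n < N then (1:ℝ) else 0) + ∑' n : ℕ, (1 / N) * t ^ n :=
        Summable.tsum_add (summable_ind N) (hgeom.mul_left _)
    _ = N + (1 / N) * (1 - t)⁻¹ := by
        rw [tsum_ind, tsum_mul_left, tsum_geometric_of_lt_one ht0.le ht1]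
  have hnn : 0 ≤ (∑' n : ℕ, t ^ n * ((n : ℝ) + 1)⁻¹) :=
    tsum_nonneg fun n => by positivity
  rw [abs_of_nonneg (mul_nonneg h1t.le hnn)]
  calc (1 - t) * ∑' n : ℕ, t ^ n * ((n : ℝ) + 1)⁻¹
      ≤ (1 - t) * (N + (1 / N) * (1 - t)⁻¹) := mul_le_mul_of_nonneg_left hbound h1t.le
    _ = (1 - t) * N + (1 / N) * ((1 - t) * (1 - t)⁻¹) := by ring
    _ = (1 - t) * N + 1 / N := by rw [mul_inv_cancel₀ (ne_of_gt h1t), mul_one]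
    _ < ε := hlt

lemma sup_e0 (i : ℕ) :
    (⨆ x : unitInterval, |perturbedBernstein i (ContinuousMap.const _ 1) x - 1|) = cubeInd i := by
  have h : ∀ x : unitInterval,
      |perturbedBernstein i (ContinuousMap.const _ 1) x - 1| = cubeInd i := by
    intro x
    rw [perturbedBernstein, bern_e0, mul_one, add_sub_cancel_left,
      abs_of_nonneg (cubeInd_nonneg i)]
  simp only [h]
  exact ciSup_const

lemma sup_e1_le {i : ℕ} (hi : 1 ≤ i) :
    (⨆ x : unitInterval, |perturbedBernstein i ⟨fun z => (z : ℝ), by fun_prop⟩ x - (x : ℝ)|)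
      ≤ cubeInd i := by
  apply ciSup_le
  intro x
  rw [perturbedBernstein, bern_e1 hi]
  have hx0 : (0:ℝ) ≤ x := x.2.1
  have hx1 : (x:ℝ) ≤ 1 := x.2.2
  have hc := cubeInd_nonneg i
  have h1 : (1 + cubeInd i) * (x : ℝ) - x = cubeInd i * x := by ring
  rw [h1, abs_of_nonneg (mul_nonneg hc hx0)]
  nlinarith

lemma sup_e2_le {i : ℕ} (hi : 1 ≤ i) :
    (⨆ x : unitInterval,
        |perturbedBernstein i ⟨fun z => (z : ℝ) ^ 2, by fun_prop⟩ x - (x : ℝ) ^ 2|)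
      ≤ cubeInd i + ((i : ℝ))⁻¹ := by
  apply ciSup_le
  intro x
  rw [perturbedBernstein, bern_e2 hi]
  have hx0 : (0:ℝ) ≤ x := x.2.1
  have hx1 : (x:ℝ) ≤ 1 := x.2.2
  have hc := cubeInd_nonneg i
  have hc1 := cubeInd_le_one i
  have hipos : (0:ℝ) < i := by exact_mod_cast hi
  set X : ℝ := (x : ℝ)
  set c : ℝ := cubeInd i
  have h1 : (1 + c) * (X ^ 2 + X * (1 - X) / i) - X ^ 2
      = c * X ^ 2 + ((1 + c) * (X * (1 - X))) / i := by ring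
  have h5 : (0:ℝ) ≤ X * (1 - X) := mul_nonneg hx0 (by linarith)
  have hnn : 0 ≤ c * X ^ 2 + ((1 + c) * (X * (1 - X))) / i :=
    add_nonneg (by positivity) (div_nonneg (mul_nonneg (by linarith) h5) hipos.le)
  rw [h1, abs_of_nonneg hnn]
  have h2 : (1 + c) * (X * (1 - X)) ≤ 1 := by nlinarith
  have h3 : ((1 + c) * (X * (1 - X))) / i ≤ 1 / i := by gcongr
  have h4 : c * X ^ 2 ≤ c := mul_le_of_le_one_right hc (by nlinarith)
  rw [inv_eq_one_div]
  linarith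

/-- For the perturbed Bernstein operators, the Abel means (power series method
with `pᵢ = 1`) of the sup-norm errors `‖Tᵢ(e_k) - e_k‖` tend to `0` as
`t → 1⁻` for each test function `e_k` (`k = 0, 1, 2`), even though
`‖Tᵢ(e₀) - e₀‖ = xᵢ` does not converge to `0` in the usual sense. -/
theorem perturbedBernstein_abel_korovkin :
    (Tendsto (fun t : ℝ => (1 - t) * ∑' n : ℕ, t ^ n *
        ⨆ x : unitInterval,
          |perturbedBernstein (n + 1) (ContinuousMap.const _ 1) x - 1|) (𝓝[<] 1) (nhds 0)) ∧
    (Tendsto (fun t : ℝ => (1 - t) * ∑' n : ℕ, t ^ n *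
        ⨆ x : unitInterval,
          |perturbedBernstein (n + 1) ⟨fun z => (z : ℝ), by fun_prop⟩ x - (x : ℝ)|)
      (𝓝[<] 1) (nhds 0)) ∧
    (Tendsto (fun t : ℝ => (1 - t) * ∑' n : ℕ, t ^ n *
        ⨆ x : unitInterval,
          |perturbedBernstein (n + 1) ⟨fun z => (z : ℝ) ^ 2, by fun_prop⟩ x - (x : ℝ) ^ 2|)
      (𝓝[<] 1) (nhds 0)) ∧
    (∀ i : ℕ, 1 ≤ i →
      (⨆ x : unitInterval, |perturbedBernstein i (ContinuousMap.const _ 1) x - 1|) = cubeInd i) ∧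
    ¬ Tendsto (fun i : ℕ =>
        ⨆ x : unitInterval, |perturbedBernstein i (ContinuousMap.const _ 1) x - 1|)
      atTop (nhds 0) := by
  have hev2 : Ioo (0 : ℝ) 1 ∈ 𝓝[<] (1 : ℝ) :=
    Ioo_mem_nhdsLT_of_mem (by constructor <;> norm_num)
  refine ⟨?_, ?_, ?_, fun i _ => sup_e0 i, ?_⟩
  · simp only [sup_e0]
    exact abel_cube
  · -- e1 case
    set S : ℕ → ℝ := fun n =>
      ⨆ x : unitInterval,
        |perturbedBernstein (n + 1) ⟨fun z => (z : ℝ), by fun_prop⟩ x - (x : ℝ)| with hS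
    have hS0 : ∀ n, 0 ≤ S n := fun n => Real.iSup_nonneg fun x => abs_nonneg _
    have hSle : ∀ n, S n ≤ cubeInd (n + 1) := fun n => sup_e1_le (Nat.le_add_left 1 n)
    apply squeeze_zero' (g := fun t : ℝ => (1 - t) * ∑' n : ℕ, t ^ n * cubeInd (n + 1))
    · filter_upwards [hev2] with t ht
      exact mul_nonneg (by linarith [ht.2]) (tsum_nonneg fun n =>
        mul_nonneg (pow_nonneg ht.1.le n) (hS0 n))
    · filter_upwards [hev2] with t ht
      obtain ⟨ht0, ht1⟩ := ht
      have hgeom : Summable (fun n : ℕ => t ^ n) := summable_geometric_of_lt_one ht0.le ht1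
      have hsum2 : Summable (fun n : ℕ => t ^ n * cubeInd (n + 1)) :=
        hgeom.of_nonneg_of_le (fun n => mul_nonneg (by positivity) (cubeInd_nonneg _))
          (fun n => by
            nlinarith [pow_pos ht0 n, cubeInd_le_one (n + 1), cubeInd_nonneg (n + 1)])
      have hsum1 : Summable (fun n : ℕ => t ^ n * S n) :=
        hsum2.of_nonneg_of_le (fun n => mul_nonneg (by positivity) (hS0 n))
          (fun n => mul_le_mul_of_nonneg_left (hSle n) (by positivity))
      exact mul_le_mul_of_nonneg_left
        (Summable.tsum_le_tsum (fun n => mul_le_mul_of_nonneg_left (hSle n) (by positivity)) hsum1 hsum2)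
        (by linarith)
    · exact abel_cube
  · -- e2 case
    set S : ℕ → ℝ := fun n =>
      ⨆ x : unitInterval,
        |perturbedBernstein (n + 1) ⟨fun z => (z : ℝ) ^ 2, by fun_prop⟩ x - (x : ℝ) ^ 2| with hS
    have hS0 : ∀ n, 0 ≤ S n := fun n => Real.iSup_nonneg fun x => abs_nonneg _
    have hSle : ∀ n, S n ≤ cubeInd (n + 1) + ((n : ℝ) + 1)⁻¹ := by
      intro n
      have := sup_e2_le (Nat.le_add_left 1 n)
      simpa using this
    apply squeeze_zero' (g := fun t : ℝ =>
      (1 - t) * (∑' n : ℕ, t ^ n * cubeInd (n + 1)) +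
        (1 - t) * ∑' n : ℕ, t ^ n * ((n : ℝ) + 1)⁻¹)
    · filter_upwards [hev2] with t ht
      exact mul_nonneg (by linarith [ht.2]) (tsum_nonneg fun n =>
        mul_nonneg (pow_nonneg ht.1.le n) (hS0 n))
    · filter_upwards [hev2] with t ht
      obtain ⟨ht0, ht1⟩ := ht
      have hgeom : Summable (fun n : ℕ => t ^ n) := summable_geometric_of_lt_one ht0.le ht1
      have hsumc : Summable (fun n : ℕ => t ^ n * cubeInd (n + 1)) :=
        hgeom.of_nonneg_of_le (fun n => mul_nonneg (by positivity) (cubeInd_nonneg _))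
          (fun n => by
            nlinarith [pow_pos ht0 n, cubeInd_le_one (n + 1), cubeInd_nonneg (n + 1)])
      have hsumh : Summable (fun n : ℕ => t ^ n * ((n : ℝ) + 1)⁻¹) :=
        hgeom.of_nonneg_of_le (fun n => by positivity)
          (fun n => by
            have h1 : ((n : ℝ) + 1)⁻¹ ≤ 1 := by
              rw [inv_le_one_iff₀]; right
              have : (0:ℝ) ≤ n := Nat.cast_nonneg n
              linarith
            nlinarith [pow_pos ht0 n])
      have hsum2 : Summable (fun n : ℕ => t ^ n * cubeInd (n + 1) + t ^ n * ((n : ℝ) + 1)⁻¹) :=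
        hsumc.add hsumh
      have hsum1 : Summable (fun n : ℕ => t ^ n * S n) :=
        hsum2.of_nonneg_of_le (fun n => mul_nonneg (by positivity) (hS0 n))
          (fun n => by
            have := mul_le_mul_of_nonneg_left (hSle n) (le_of_lt (pow_pos ht0 n))
            nlinarith [this])
      calc (1 - t) * ∑' n : ℕ, t ^ n * S n
          ≤ (1 - t) * ∑' n : ℕ, (t ^ n * cubeInd (n + 1) + t ^ n * ((n : ℝ) + 1)⁻¹) := by
            refine mul_le_mul_of_nonneg_left
              (Summable.tsum_le_tsum (fun n => ?_) hsum1 hsum2) (by linarith)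
            have := mul_le_mul_of_nonneg_left (hSle n) (le_of_lt (pow_pos ht0 n))
            nlinarith [this]
        _ = (1 - t) * (∑' n : ℕ, t ^ n * cubeInd (n + 1)) +
              (1 - t) * ∑' n : ℕ, t ^ n * ((n : ℝ) + 1)⁻¹ := by
            rw [Summable.tsum_add hsumc hsumh]; ring
    · simpa using abel_cube.add abel_harm
  · -- non-convergence
    intro h
    have hmono : Tendsto (fun m : ℕ => (m + 1) ^ 3) atTop atTop := by
      apply tendsto_atTop_mono (f := fun m : ℕ => m) (fun m => ?_) tendsto_id
      calc m ≤ m + 1 := Nat.le_succ m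
      _ ≤ (m + 1) ^ 3 := Nat.le_self_pow (by norm_num) _
    have h2 := h.comp hmono
    have h3 : ((fun i : ℕ =>
        ⨆ x : unitInterval, |perturbedBernstein i (ContinuousMap.const _ 1) x - 1|) ∘
          fun m : ℕ => (m + 1) ^ 3) = fun _ : ℕ => (1 : ℝ) := by
      funext m
      simp only [Function.comp_apply, sup_e0, cubeInd_cube]
    rw [h3] at h2
    have := tendsto_nhds_unique h2 tendsto_const_nhds
    norm_num at this
end
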